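/- Let η > 0 and let w₀ ∈ [0,1] with w₀ ≠ 1/2. Define the clipped gradient-descent iteration on the binarizing regularizer r(w) = w·(1 − w) by w_{n+1} = min(1, max(0, w_n − η·(1 − 2·w_n))). Then there exists N such that for all n ≥ N, w_n ∈ {0, 1}; moreover if w₀ > 1/2 then w_n = 1 for all n ≥ N, and if w₀ < 1/2 then w_n = 0 for all n ≥ N. -/
import Mathlib


/-- Clipped gradient descent on the binarizing regularizer r(w) = w(1 − w) converges to a
binary value: starting from w₀ ∈ [0,1] with w₀ ≠ 1/2, after finitely many steps the
iterates are in {0, 1}; they equal 1 if w₀ > 1/2 and 0 if w₀ < 1/2. -/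
theorem binarizing_clipped_gradient_descent_converges
    (η : ℝ) (hη : 0 < η)
    (w : ℕ → ℝ)
    (hw0 : w 0 ∈ Set.Icc (0 : ℝ) 1) (hw0half : w 0 ≠ 1 / 2)
    (hstep : ∀ n : ℕ, w (n + 1) = min 1 (max 0 (w n - η * (1 - 2 * w n)))) :
    ∃ N : ℕ, (∀ n ≥ N, w n = 0 ∨ w n = 1) ∧
      (w 0 > 1 / 2 → ∀ n ≥ N, w n = 1) ∧
      (w 0 < 1 / 2 → ∀ n ≥ N, w n = 0) := by
  obtain ⟨hw00, hw01⟩ := hw0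
  have fix1 : ∀ n, w n = 1 → w (n + 1) = 1 := by
    intro n h
    rw [hstep n, h]
    rw [max_eq_right (by nlinarith), min_eq_left (by nlinarith)]
  have fix0 : ∀ n, w n = 0 → w (n + 1) = 0 := by
    intro n h
    rw [hstep n, h]
    rw [max_eq_left (by nlinarith), min_eq_right (by norm_num)]
  have h1lt : (1 : ℝ) < 1 + 2 * η := by linarith
  rcases lt_or_gt_of_ne hw0half with hlt | hgt
  · -- w 0 < 1/2, converges to 0
    have key : ∀ n, w n = 0 ∨
        (0 < w n ∧ w n < 1 / 2 ∧ (1 + 2 * η) ^ n * (1 / 2 - w 0) ≤ 1 / 2 - w n) := by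
      intro n
      induction n with
      | zero =>
        rcases eq_or_lt_of_le hw00 with h | h
        · exact Or.inl h.symm
        · exact Or.inr ⟨h, hlt, by simp⟩
      | succ n ih =>
        rcases ih with h | ⟨h1, h2, h3⟩
        · exact Or.inl (fix0 n h)
        · rw [hstep n]
          rcases le_or_gt (w n - η * (1 - 2 * w n)) 0 with hc | hc
          · left
            rw [max_eq_left hc, min_eq_right (by norm_num)]
          · right
            rw [max_eq_right hc.le]
            have hx : w n - η * (1 - 2 * w n) < w n := by nlinarith
            rw [min_eq_right (by linarith)]
            have hp : (0:ℝ) ≤ (1 + 2 * η) ^ n := by positivity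
            refine ⟨hc, by linarith, ?_⟩
            rw [pow_succ]
            nlinarith
    obtain ⟨N, hN⟩ := pow_unbounded_of_one_lt ((1 / 2) / (1 / 2 - w 0)) h1lt
    have hNbig : 1 / 2 < (1 + 2 * η) ^ N * (1 / 2 - w 0) := by
      rw [div_lt_iff₀ (by linarith)] at hN
      linarith
    have hwN : w N = 0 := by
      rcases key N with h | ⟨_, _, h3⟩
      · exact h
      · linarith
    have hall : ∀ n ≥ N, w n = 0 := by
      intro n hn
      induction n, hn using Nat.le_induction with
      | base => exact hwN
      | succ n hn ih => exact fix0 n ih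
    exact ⟨N, fun n hn => Or.inl (hall n hn), fun h => absurd h (by linarith), fun _ => hall⟩
  · -- w 0 > 1/2, converges to 1
    have key : ∀ n, w n = 1 ∨
        (1 / 2 < w n ∧ w n < 1 ∧ (1 + 2 * η) ^ n * (w 0 - 1 / 2) ≤ w n - 1 / 2) := by
      intro n
      induction n with
      | zero =>
        rcases eq_or_lt_of_le hw01 with h | h
        · exact Or.inl h
        · exact Or.inr ⟨hgt, h, by simp⟩
      | succ n ih =>
        rcases ih with h | ⟨h1, h2, h3⟩
        · exact Or.inl (fix1 n h)
        · rw [hstep n]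
          have hx : w n < w n - η * (1 - 2 * w n) := by nlinarith
          rw [max_eq_right (by linarith)]
          rcases le_or_gt 1 (w n - η * (1 - 2 * w n)) with hc | hc
          · exact Or.inl (min_eq_left hc)
          · right
            rw [min_eq_right hc.le]
            have hp : (0:ℝ) ≤ (1 + 2 * η) ^ n := by positivity
            refine ⟨by linarith, hc, ?_⟩
            rw [pow_succ]
            nlinarith
    obtain ⟨N, hN⟩ := pow_unbounded_of_one_lt ((1 / 2) / (w 0 - 1 / 2)) h1lt
    have hNbig : 1 / 2 < (1 + 2 * η) ^ N * (w 0 - 1 / 2) := by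
      rw [div_lt_iff₀ (by linarith)] at hN
      linarith
    have hwN : w N = 1 := by
      rcases key N with h | ⟨_, _, h3⟩
      · exact h
      · linarith
    have hall : ∀ n ≥ N, w n = 1 := by
      intro n hn
      induction n, hn using Nat.le_induction with
      | base => exact hwN
      | succ n hn ih => exact fix1 n ih
    exact ⟨N, fun n hn => Or.inr (hall n hn), fun _ => hall, fun h => absurd h (by linarith)⟩
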